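/- Let u be a C^∞ solution of the translating soliton equation on an open set Ω ⊆ ℝ². Set W := √(1 + |∇u|²) and a^{ij} := δ_{ij} − u_{x_i}·u_{x_j}/W² for i, j ∈ {1,2}. Then at every point of Ω, Σ_{i,j} a^{ij}·W_{x_i x_j} − (2/W)·Σ_{i,j} a^{ij}·W_{x_i}·W_{x_j} ≥ 1/(2W). -/

import Mathlib

open Real Filter
set_option linter.unreachableTactic false
set_option linter.unusedTactic false
set_option linter.unnecessarySeqFocus false

noncomputable def pd1 (f : ℝ × ℝ → ℝ) (p : ℝ × ℝ) : ℝ := fderiv ℝ f p (1, 0)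

noncomputable def pd2 (f : ℝ × ℝ → ℝ) (p : ℝ × ℝ) : ℝ := fderiv ℝ f p (0, 1)

/-- The translating soliton equation in nondivergence form. -/
def IsSolitonAt (u : ℝ × ℝ → ℝ) (p : ℝ × ℝ) : Prop :=
  (1 + (pd2 u p) ^ 2) * pd1 (pd1 u) p
    - 2 * pd1 u p * pd2 u p * pd2 (pd1 u) p
    + (1 + (pd1 u p) ^ 2) * pd2 (pd2 u) p
  = 1 + (pd1 u p) ^ 2 + (pd2 u p) ^ 2

/-- `W = √(1 + |∇u|²)`. -/
noncomputable def Wfun (u : ℝ × ℝ → ℝ) (p : ℝ × ℝ) : ℝ :=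
  Real.sqrt (1 + (pd1 u p) ^ 2 + (pd2 u p) ^ 2)

lemma pd1_def (f : ℝ × ℝ → ℝ) (p : ℝ × ℝ) : pd1 f p = fderiv ℝ f p (1,0) := rfl
lemma pd2_def (f : ℝ × ℝ → ℝ) (p : ℝ × ℝ) : pd2 f p = fderiv ℝ f p (0,1) := rfl

lemma pd1_of_hasFDerivAt {f : ℝ × ℝ → ℝ} {L : ℝ × ℝ →L[ℝ] ℝ} {x : ℝ × ℝ}
    (h : HasFDerivAt f L x) : pd1 f x = L (1,0) := by rw [pd1, h.fderiv]

lemma pd2_of_hasFDerivAt {f : ℝ × ℝ → ℝ} {L : ℝ × ℝ →L[ℝ] ℝ} {x : ℝ × ℝ}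
    (h : HasFDerivAt f L x) : pd2 f x = L (0,1) := by rw [pd2, h.fderiv]

lemma contDiffOn_pd1 {Ω : Set (ℝ × ℝ)} (hΩ : IsOpen Ω) {f : ℝ × ℝ → ℝ} {n : WithTop ℕ∞}
    (hf : ContDiffOn ℝ (n+1) f Ω) : ContDiffOn ℝ n (pd1 f) Ω := by
  have h1 : ContDiffOn ℝ n (fun x => fderivWithin ℝ f Ω x) Ω :=
    hf.fderivWithin hΩ.uniqueDiffOn le_rfl
  exact (h1.clm_apply contDiffOn_const).congr fun x hx => by
    rw [pd1, fderivWithin_of_isOpen hΩ hx]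

lemma contDiffOn_pd2 {Ω : Set (ℝ × ℝ)} (hΩ : IsOpen Ω) {f : ℝ × ℝ → ℝ} {n : WithTop ℕ∞}
    (hf : ContDiffOn ℝ (n+1) f Ω) : ContDiffOn ℝ n (pd2 f) Ω := by
  have h1 : ContDiffOn ℝ n (fun x => fderivWithin ℝ f Ω x) Ω :=
    hf.fderivWithin hΩ.uniqueDiffOn le_rfl
  exact (h1.clm_apply contDiffOn_const).congr fun x hx => by
    rw [pd2, fderivWithin_of_isOpen hΩ hx]

lemma diffAt_of {Ω : Set (ℝ × ℝ)} (hΩ : IsOpen Ω) {f : ℝ × ℝ → ℝ}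
    (hf : ContDiffOn ℝ 1 f Ω) {x : ℝ × ℝ} (hx : x ∈ Ω) : DifferentiableAt ℝ f x :=
  (hf.contDiffAt (hΩ.mem_nhds hx)).differentiableAt one_ne_zero

lemma schwarz {Ω : Set (ℝ × ℝ)} (hΩ : IsOpen Ω) {f : ℝ × ℝ → ℝ}
    (hf : ContDiffOn ℝ 2 f Ω) {x : ℝ × ℝ} (hx : x ∈ Ω) :
    pd1 (pd2 f) x = pd2 (pd1 f) x := by
  have hca : ContDiffAt ℝ 2 f x := hf.contDiffAt (hΩ.mem_nhds hx)
  have hf' : ∀ᶠ y in nhds x, HasFDerivAt f (fderiv ℝ f y) y := by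
    filter_upwards [hΩ.eventually_mem hx] with y hy
    exact ((hf.contDiffAt (hΩ.mem_nhds hy)).differentiableAt (by norm_num)).hasFDerivAt
  have h2 : HasFDerivAt (fderiv ℝ f) (fderiv ℝ (fderiv ℝ f) x) x :=
    ((hca.fderiv_right (m := 1) (by norm_num)).differentiableAt (by norm_num)).hasFDerivAt
  have hsymm := second_derivative_symmetric_of_eventually hf' h2
  have e1 : HasFDerivAt (fun y => fderiv ℝ f y ((0:ℝ),(1:ℝ)))
      (((fderiv ℝ f x).comp 0) + (fderiv ℝ (fderiv ℝ f) x).flip ((0:ℝ),(1:ℝ))) x :=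
    h2.clm_apply (hasFDerivAt_const _ _)
  have e2 : HasFDerivAt (fun y => fderiv ℝ f y ((1:ℝ),(0:ℝ)))
      (((fderiv ℝ f x).comp 0) + (fderiv ℝ (fderiv ℝ f) x).flip ((1:ℝ),(0:ℝ))) x :=
    h2.clm_apply (hasFDerivAt_const _ _)
  have A1 : pd1 (pd2 f) x = fderiv ℝ (fderiv ℝ f) x (1,0) (0,1) := by
    have := pd1_of_hasFDerivAt (f := pd2 f) e1
    simpa using this
  have A2 : pd2 (pd1 f) x = fderiv ℝ (fderiv ℝ f) x (0,1) (1,0) := by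
    have := pd2_of_hasFDerivAt (f := pd1 f) e2
    simpa using this
  rw [A1, A2, hsymm]

-- W smoothness
lemma Wfun_pos (u : ℝ × ℝ → ℝ) (x : ℝ × ℝ) : 0 < Wfun u x :=
  Real.sqrt_pos.mpr (by positivity)

lemma Wfun_sq (u : ℝ × ℝ → ℝ) (x : ℝ × ℝ) :
    Wfun u x * Wfun u x = 1 + pd1 u x * pd1 u x + pd2 u x * pd2 u x := by
  have h := Real.sq_sqrt (show (0:ℝ) ≤ 1 + (pd1 u x)^2 + (pd2 u x)^2 by positivity)
  rw [Wfun]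
  nlinarith [h]

lemma Wfun_contDiffOn {Ω : Set (ℝ × ℝ)} (hΩ : IsOpen Ω) {u : ℝ × ℝ → ℝ}
    (hu : ContDiffOn ℝ ((3:ℕ)+1) u Ω) : ContDiffOn ℝ (3:ℕ) (Wfun u) Ω := by
  have hP : ContDiffOn ℝ (3:ℕ) (pd1 u) Ω := contDiffOn_pd1 hΩ hu
  have hQ : ContDiffOn ℝ (3:ℕ) (pd2 u) Ω := contDiffOn_pd2 hΩ hu
  have hV : ContDiffOn ℝ (3:ℕ) (fun x => 1 + (pd1 u x)^2 + (pd2 u x)^2) Ω := by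
    have := ((contDiffOn_const (c := (1:ℝ))).add (hP.mul hP)).add (hQ.mul hQ)
    exact this.congr (fun x _ => by ring)
  intro x hx
  have hpos : (1 + (pd1 u x)^2 + (pd2 u x)^2) ≠ 0 := by positivity
  exact (Real.contDiffAt_sqrt hpos).comp_contDiffWithinAt x (hV x hx)

lemma fderiv_eqOn {Ω : Set (ℝ × ℝ)} (hΩ : IsOpen Ω) {f g : ℝ × ℝ → ℝ} {x : ℝ × ℝ}
    (hx : x ∈ Ω) (h : ∀ y ∈ Ω, f y = g y) : fderiv ℝ f x = fderiv ℝ g x :=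
  Filter.EventuallyEq.fderiv_eq (by
    filter_upwards [hΩ.eventually_mem hx] with y hy using h y hy)

lemma idW1 {Ω : Set (ℝ × ℝ)} (hΩ : IsOpen Ω) {u : ℝ × ℝ → ℝ}
    (hu : ContDiffOn ℝ ((3:ℕ)+1) u Ω) {y : ℝ × ℝ} (hy : y ∈ Ω) :
    Wfun u y * pd1 (Wfun u) y = pd1 u y * pd1 (pd1 u) y + pd2 u y * pd1 (pd2 u) y := by
  have hP3 : ContDiffOn ℝ (3:ℕ) (pd1 u) Ω := contDiffOn_pd1 hΩ hu
  have hQ3 : ContDiffOn ℝ (3:ℕ) (pd2 u) Ω := contDiffOn_pd2 hΩ hu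
  have hW3 : ContDiffOn ℝ (3:ℕ) (Wfun u) Ω := Wfun_contDiffOn hΩ hu
  have hWd := (diffAt_of hΩ (hW3.of_le (by norm_num)) hy).hasFDerivAt
  have hPd := (diffAt_of hΩ (hP3.of_le (by norm_num)) hy).hasFDerivAt
  have hQd := (diffAt_of hΩ (hQ3.of_le (by norm_num)) hy).hasFDerivAt
  have E : fderiv ℝ (fun z => Wfun u z * Wfun u z) y (1,0)
      = fderiv ℝ (fun z => 1 + (pd1 u z * pd1 u z + pd2 u z * pd2 u z)) y (1,0) := by
    rw [fderiv_eqOn (g := fun z => 1 + (pd1 u z * pd1 u z + pd2 u z * pd2 u z)) hΩ hy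
      (fun z _ => by rw [Wfun_sq]; ring)]
  erw [(hWd.mul hWd).fderiv, (((hPd.mul hPd).add (hQd.mul hQd)).const_add 1).fderiv] at E
  simp only [ContinuousLinearMap.add_apply, ContinuousLinearMap.coe_smul', Pi.smul_apply,
    smul_eq_mul, ← pd1_def] at E
  linarith

lemma idW2 {Ω : Set (ℝ × ℝ)} (hΩ : IsOpen Ω) {u : ℝ × ℝ → ℝ}
    (hu : ContDiffOn ℝ ((3:ℕ)+1) u Ω) {y : ℝ × ℝ} (hy : y ∈ Ω) :
    Wfun u y * pd2 (Wfun u) y = pd1 u y * pd2 (pd1 u) y + pd2 u y * pd2 (pd2 u) y := by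
  have hP3 : ContDiffOn ℝ (3:ℕ) (pd1 u) Ω := contDiffOn_pd1 hΩ hu
  have hQ3 : ContDiffOn ℝ (3:ℕ) (pd2 u) Ω := contDiffOn_pd2 hΩ hu
  have hW3 : ContDiffOn ℝ (3:ℕ) (Wfun u) Ω := Wfun_contDiffOn hΩ hu
  have hWd := (diffAt_of hΩ (hW3.of_le (by norm_num)) hy).hasFDerivAt
  have hPd := (diffAt_of hΩ (hP3.of_le (by norm_num)) hy).hasFDerivAt
  have hQd := (diffAt_of hΩ (hQ3.of_le (by norm_num)) hy).hasFDerivAt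
  have E : fderiv ℝ (fun z => Wfun u z * Wfun u z) y (0,1)
      = fderiv ℝ (fun z => 1 + (pd1 u z * pd1 u z + pd2 u z * pd2 u z)) y (0,1) := by
    rw [fderiv_eqOn (g := fun z => 1 + (pd1 u z * pd1 u z + pd2 u z * pd2 u z)) hΩ hy
      (fun z _ => by rw [Wfun_sq]; ring)]
  erw [(hWd.mul hWd).fderiv, (((hPd.mul hPd).add (hQd.mul hQd)).const_add 1).fderiv] at E
  simp only [ContinuousLinearMap.add_apply, ContinuousLinearMap.coe_smul', Pi.smul_apply,
    smul_eq_mul, ← pd2_def] at E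
  linarith

set_option maxRecDepth 10000 in
set_option maxHeartbeats 2000000 in
lemma key (vp vq vr vs vt vA vB vC vD w W1 W2 W11 W12 W21 W22 : ℝ)
    (hw : w * w = 1 + vp*vp + vq*vq)
    (hwpos : 0 < w)
    (e0 : (1 + vq^2) * vr - 2*vp*vq*vs + (1+vp^2)*vt = 1 + vp^2 + vq^2)
    (e1 : (1+vq^2)*vA - 2*vp*vq*vB + (1+vp^2)*vC + 2*vq*vs*vr
        - 2*(vr*vq*vs + vp*vs*vs) + 2*vp*vr*vt - (2*vp*vr + 2*vq*vs) = 0)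
    (e2 : (1+vq^2)*vB - 2*vp*vq*vC + (1+vp^2)*vD + 2*vq*vt*vr
        - 2*(vs*vq*vs + vp*vt*vs) + 2*vp*vs*vt - (2*vp*vs + 2*vq*vt) = 0)
    (hW1 : w * W1 = vp*vr + vq*vs)
    (hW2 : w * W2 = vp*vs + vq*vt)
    (h11 : w * W11 + W1*W1 = vr*vr + vp*vA + vs*vs + vq*vB)
    (h12 : w * W12 + W2*W1 = vs*vr + vp*vB + vt*vs + vq*vC)
    (h21 : w * W21 + W1*W2 = vr*vs + vp*vB + vs*vt + vq*vC)
    (h22 : w * W22 + W2*W2 = vs*vs + vp*vC + vt*vt + vq*vD) :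
    (1 - vp^2/w^2) * W11 + (-(vp*vq)/w^2) * W12 + (-(vp*vq)/w^2) * W21
      + (1 - vq^2/w^2) * W22
      - 2/w * ((1-vp^2/w^2)*W1^2 + 2*(-(vp*vq)/w^2)*W1*W2 + (1-vq^2/w^2)*W2^2)
    ≥ 1/(2*w) := by
  have hwne : w ≠ 0 := hwpos.ne'
  rw [ge_iff_le, ← sub_nonneg]
  have main : (1 - vp^2/w^2) * W11 + (-(vp*vq)/w^2) * W12 + (-(vp*vq)/w^2) * W21
      + (1 - vq^2/w^2) * W22
      - 2/w * ((1-vp^2/w^2)*W1^2 + 2*(-(vp*vq)/w^2)*W1*W2 + (1-vq^2/w^2)*W2^2)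
      - 1/(2*w)
      = ((w*w)^2*(2*vr-1-vp^2)^2 + 4*(w*w)*(vp*vq*vr-(1+vp^2)*vs)^2) / (2*w^5*(1+vp^2)^2) := by
    field_simp
    refine mul_left_cancel₀ (show (2:ℝ) * w ^ 8 ≠ 0 by positivity) ?_
    linear_combination (norm := ring1) ((-4) + (-4)*w^2 + (-4)*w^4 + (-4)*w^6 + (-4)*w^8 + 4*vt^2 + 4*vt^2*w^2 + 4*vt^2*w^4 + 4*vt^2*w^6 + 4*vt^2*w^8 + 8*vs^2*w^8 + 8*vr + 8*vr*w^2 + 8*vr*w^4 + 8*vr*w^6 + 8*vr*w^8 + (-4)*vr^2 + (-4)*vr^2*w^2 + (-4)*vr^2*w^4 + (-4)*vr^2*w^6 + (-4)*vr^2*w^8 + 4*vq*vD + 4*vq*vD*w^2 + 4*vq*vD*w^4 + 4*vq*vD*w^6 + 4*vq*vD*w^8 + 4*vq*vB + 4*vq*vB*w^2 + 4*vq*vB*w^4 + 4*vq*vB*w^6 + 4*vq*vB*w^8 + (-16)*vq^2 + (-12)*vq^2*w^2 + (-8)*vq^2*w^4 + (-4)*vq^2*w^6 + (-4)*vq^2*vt^2*w^2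 + (-8)*vq^2*vt^2*w^4 + (-12)*vq^2*vt^2*w^6 + (-8)*vq^2*vs^2 + (-8)*vq^2*vs^2*w^2 + (-8)*vq^2*vs^2*w^4 + (-8)*vq^2*vs^2*w^6 + 32*vq^2*vr + 24*vq^2*vr*w^2 + 16*vq^2*vr*w^4 + 8*vq^2*vr*w^6 + (-16)*vq^2*vr^2 + (-12)*vq^2*vr^2*w^2 + (-8)*vq^2*vr^2*w^4 + (-4)*vq^2*vr^2*w^6 + 12*vq^3*vD + 8*vq^3*vD*w^2 + 4*vq^3*vD*w^4 + 16*vq^3*vB + 12*vq^3*vB*w^2 + 8*vq^3*vB*w^4 + 4*vq^3*vB*w^6 + (-24)*vq^4 + (-12)*vq^4*w^2 + (-4)*vq^4*w^4 + (-12)*vq^4*vt^2 + (-8)*vq^4*vt^2*w^2 + (-24)*vq^4*vs^2 + (-16)*vq^4*vs^2*w^2 + (-8)*vq^4*vs^2*w^4 + 48*vq^4*vr + 24*vq^4*vr*w^2 + 8*vq^4*vr*w^4 + (-24)*vq^4*vr^2 + (-12)*vq^4*vr^2*w^2 + (-4)*vq^4*vr^2*w^4 + 12*vq^5*vD + 4*vq^5*vD*w^2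 + 24*vq^5*vB + 12*vq^5*vB*w^2 + 4*vq^5*vB*w^4 + (-16)*vq^6 + (-4)*vq^6*w^2 + (-8)*vq^6*vt^2 + (-24)*vq^6*vs^2 + (-8)*vq^6*vs^2*w^2 + 32*vq^6*vr + 8*vq^6*vr*w^2 + (-16)*vq^6*vr^2 + (-4)*vq^6*vr^2*w^2 + 4*vq^7*vD + 16*vq^7*vB + 4*vq^7*vB*w^2 + (-4)*vq^8 + (-8)*vq^8*vs^2 + 8*vq^8*vr + (-4)*vq^8*vr^2 + 4*vq^9*vB + 4*vp*vC + 4*vp*vC*w^2 + 4*vp*vC*w^4 + 4*vp*vC*w^6 + 4*vp*vC*w^8 + 4*vp*vA + 4*vp*vA*w^2 + 4*vp*vA*w^4 + 4*vp*vA*w^6 + 4*vp*vA*w^8 + (-32)*vp*vq*vs*vt + (-32)*vp*vq*vs*vt*w^2 + (-32)*vp*vq*vs*vt*w^4 + (-32)*vp*vq*vs*vt*w^6 + (-16)*vp*vq*vr*vs + (-16)*vp*vq*vr*vs*w^2 + (-16)*vp*vq*vr*vs*w^4 + (-16)*vp*vq*vr*vs*w^6 + 4*vp*vq^2*vC + (-4)*vp*vq^2*vC*w^4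 + (-8)*vp*vq^2*vC*w^6 + 16*vp*vq^2*vA + 12*vp*vq^2*vA*w^2 + 8*vp*vq^2*vA*w^4 + 4*vp*vq^2*vA*w^6 + (-48)*vp*vq^3*vs*vt + (-16)*vp*vq^3*vs*vt*w^2 + 16*vp*vq^3*vs*vt*w^4 + (-48)*vp*vq^3*vr*vs + (-32)*vp*vq^3*vr*vs*w^2 + (-16)*vp*vq^3*vr*vs*w^4 + (-12)*vp*vq^4*vC + (-12)*vp*vq^4*vC*w^2 + (-8)*vp*vq^4*vC*w^4 + 24*vp*vq^4*vA + 12*vp*vq^4*vA*w^2 + 4*vp*vq^4*vA*w^4 + 16*vp*vq^5*vs*vt*w^2 + (-48)*vp*vq^5*vr*vs + (-16)*vp*vq^5*vr*vs*w^2 + (-20)*vp*vq^6*vC + (-8)*vp*vq^6*vC*w^2 + 16*vp*vq^6*vA + 4*vp*vq^6*vA*w^2 + 16*vp*vq^7*vs*vt + (-16)*vp*vq^7*vr*vs + (-8)*vp*vq^8*vC + 4*vp*vq^8*vA + (-24)*vp^2 + (-20)*vp^2*w^2 + (-16)*vp^2*w^4 + (-12)*vp^2*w^6 + (-8)*vp^2*w^8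 + 24*vp^2*vt^2 + 20*vp^2*vt^2*w^2 + 16*vp^2*vt^2*w^4 + 12*vp^2*vt^2*w^6 + 8*vp^2*vt^2*w^8 + (-8)*vp^2*vs^2 + (-8)*vp^2*vs^2*w^2 + (-8)*vp^2*vs^2*w^4 + (-8)*vp^2*vs^2*w^6 + 16*vp^2*vs^2*w^8 + 40*vp^2*vr + 32*vp^2*vr*w^2 + 24*vp^2*vr*w^4 + 16*vp^2*vr*w^6 + 8*vp^2*vr*w^8 + (-24)*vp^2*vr^2 + (-20)*vp^2*vr^2*w^2 + (-16)*vp^2*vr^2*w^4 + (-12)*vp^2*vr^2*w^6 + 8*vp^2*vr^2*w^8 + 24*vp^2*vq*vD + 20*vp^2*vq*vD*w^2 + 16*vp^2*vq*vD*w^4 + 12*vp^2*vq*vD*w^6 + 8*vp^2*vq*vD*w^8 + 12*vp^2*vq*vB + 8*vp^2*vq*vB*w^2 + 4*vp^2*vq*vB*w^4 + 8*vp^2*vq*vB*w^8 + (-80)*vp^2*vq^2 + (-48)*vp^2*vq^2*w^2 + (-24)*vp^2*vq^2*w^4 + (-8)*vp^2*vq^2*w^6 + (-16)*vp^2*vq^2*vt^2*w^2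 + (-24)*vp^2*vq^2*vt^2*w^4 + (-24)*vp^2*vq^2*vt^2*w^6 + (-16)*vp^2*vq^2*vs^2 + 16*vp^2*vq^2*vs^2*w^4 + (-16)*vp^2*vq^2*vs^2*w^6 + 128*vp^2*vq^2*vr + 72*vp^2*vq^2*vr*w^2 + 32*vp^2*vq^2*vr*w^4 + 8*vp^2*vq^2*vr*w^6 + 24*vp^2*vq^2*vr*vt + 24*vp^2*vq^2*vr*vt*w^2 + 24*vp^2*vq^2*vr*vt*w^4 + (-72)*vp^2*vq^2*vr^2 + (-40)*vp^2*vq^2*vr^2*w^2 + (-16)*vp^2*vq^2*vr^2*w^4 + 60*vp^2*vq^3*vD + 32*vp^2*vq^3*vD*w^2 + 12*vp^2*vq^3*vD*w^4 + 44*vp^2*vq^3*vB + 24*vp^2*vq^3*vB*w^2 + 12*vp^2*vq^3*vB*w^4 + 8*vp^2*vq^3*vB*w^6 + (-96)*vp^2*vq^4 + (-36)*vp^2*vq^4*w^2 + (-8)*vp^2*vq^4*w^4 + (-48)*vp^2*vq^4*vt^2 + (-24)*vp^2*vq^4*vt^2*w^2 + (-24)*vp^2*vq^4*vs^2 + (-8)*vp^2*vq^4*vs^2*w^2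 + (-16)*vp^2*vq^4*vs^2*w^4 + 144*vp^2*vq^4*vr + 48*vp^2*vq^4*vr*w^2 + 8*vp^2*vq^4*vr*w^4 + 48*vp^2*vq^4*vr*vt + 24*vp^2*vq^4*vr*vt*w^2 + (-72)*vp^2*vq^4*vr^2 + (-20)*vp^2*vq^4*vr^2*w^2 + 48*vp^2*vq^5*vD + 12*vp^2*vq^5*vD*w^2 + 60*vp^2*vq^5*vB + 24*vp^2*vq^5*vB*w^2 + 8*vp^2*vq^5*vB*w^4 + (-48)*vp^2*vq^6 + (-8)*vp^2*vq^6*w^2 + (-24)*vp^2*vq^6*vt^2 + (-32)*vp^2*vq^6*vs^2 + (-16)*vp^2*vq^6*vs^2*w^2 + 64*vp^2*vq^6*vr + 8*vp^2*vq^6*vr*w^2 + 24*vp^2*vq^6*vr*vt + (-24)*vp^2*vq^6*vr^2 + 12*vp^2*vq^7*vD + 36*vp^2*vq^7*vB + 8*vp^2*vq^7*vB*w^2 + (-8)*vp^2*vq^8 + (-16)*vp^2*vq^8*vs^2 + 8*vp^2*vq^8*vr + 8*vp^2*vq^9*vB + 24*vp^3*vC + 20*vp^3*vC*w^2 + 16*vp^3*vC*w^4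 + 12*vp^3*vC*w^6 + 8*vp^3*vC*w^8 + 20*vp^3*vA + 16*vp^3*vA*w^2 + 12*vp^3*vA*w^4 + 8*vp^3*vA*w^6 + 8*vp^3*vA*w^8 + (-160)*vp^3*vq*vs*vt + (-128)*vp^3*vq*vs*vt*w^2 + (-96)*vp^3*vq*vs*vt*w^4 + (-64)*vp^3*vq*vs*vt*w^6 + (-48)*vp^3*vq*vr*vs + (-32)*vp^3*vq*vr*vs*w^2 + (-16)*vp^3*vq*vr*vs*w^4 + (-48)*vp^3*vq*vr*vs*w^6 + 20*vp^3*vq^2*vC + (-12)*vp^3*vq^2*vC*w^4 + (-16)*vp^3*vq^2*vC*w^6 + 68*vp^3*vq^2*vA + 40*vp^3*vq^2*vA*w^2 + 20*vp^3*vq^2*vA*w^4 + 8*vp^3*vq^2*vA*w^6 + (-192)*vp^3*vq^3*vs*vt + (-48)*vp^3*vq^3*vs*vt*w^2 + 32*vp^3*vq^3*vs*vt*w^4 + (-144)*vp^3*vq^3*vr*vs + (-80)*vp^3*vq^3*vr*vs*w^2 + (-48)*vp^3*vq^3*vr*vs*w^4 + (-48)*vp^3*vq^4*vC + (-36)*vp^3*vq^4*vC*w^2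 + (-16)*vp^3*vq^4*vC*w^4 + 84*vp^3*vq^4*vA + 32*vp^3*vq^4*vA*w^2 + 8*vp^3*vq^4*vA*w^4 + 32*vp^3*vq^5*vs*vt*w^2 + (-144)*vp^3*vq^5*vr*vs + (-48)*vp^3*vq^5*vr*vs*w^2 + (-60)*vp^3*vq^6*vC + (-16)*vp^3*vq^6*vC*w^2 + 44*vp^3*vq^6*vA + 8*vp^3*vq^6*vA*w^2 + 32*vp^3*vq^7*vs*vt + (-48)*vp^3*vq^7*vr*vs + (-16)*vp^3*vq^8*vC + 8*vp^3*vq^8*vA + (-60)*vp^4 + (-40)*vp^4*w^2 + (-24)*vp^4*w^4 + (-12)*vp^4*w^6 + (-4)*vp^4*w^8 + 60*vp^4*vt^2 + 40*vp^4*vt^2*w^2 + 24*vp^4*vt^2*w^4 + 12*vp^4*vt^2*w^6 + 4*vp^4*vt^2*w^8 + (-40)*vp^4*vs^2 + (-32)*vp^4*vs^2*w^2 + (-24)*vp^4*vs^2*w^4 + (-16)*vp^4*vs^2*w^6 + 8*vp^4*vs^2*w^8 + 80*vp^4*vr + 48*vp^4*vr*w^2 + 24*vp^4*vr*w^4 +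 8*vp^4*vr*w^6 + (-56)*vp^4*vr^2 + (-36)*vp^4*vr^2*w^2 + (-20)*vp^4*vr^2*w^4 + (-20)*vp^4*vr^2*w^6 + 4*vp^4*vr^2*w^8 + 60*vp^4*vq*vD + 40*vp^4*vq*vD*w^2 + 24*vp^4*vq*vD*w^4 + 12*vp^4*vq*vD*w^6 + 4*vp^4*vq*vD*w^8 + (-8)*vp^4*vq*vB*w^2 + (-12)*vp^4*vq*vB*w^4 + (-12)*vp^4*vq*vB*w^6 + 4*vp^4*vq*vB*w^8 + (-160)*vp^4*vq^2 + (-72)*vp^4*vq^2*w^2 + (-24)*vp^4*vq^2*w^4 + (-4)*vp^4*vq^2*w^6 + (-24)*vp^4*vq^2*vt^2*w^2 + (-24)*vp^4*vq^2*vt^2*w^4 + (-12)*vp^4*vq^2*vt^2*w^6 + 16*vp^4*vq^2*vs^2 + 48*vp^4*vq^2*vs^2*w^2 + 56*vp^4*vq^2*vs^2*w^4 + (-8)*vp^4*vq^2*vs^2*w^6 + 192*vp^4*vq^2*vr + 72*vp^4*vq^2*vr*w^2 + 16*vp^4*vq^2*vr*w^4 + 96*vp^4*vq^2*vr*vt +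 72*vp^4*vq^2*vr*vt*w^2 + 48*vp^4*vq^2*vr*vt*w^4 + (-128)*vp^4*vq^2*vr^2 + (-52)*vp^4*vq^2*vr^2*w^2 + (-16)*vp^4*vq^2*vr^2*w^4 + 4*vp^4*vq^2*vr^2*w^6 + 120*vp^4*vq^3*vD + 48*vp^4*vq^3*vD*w^2 + 12*vp^4*vq^3*vD*w^4 + 16*vp^4*vq^3*vB + 4*vp^4*vq^3*vB*w^6 + (-144)*vp^4*vq^4 + (-36)*vp^4*vq^4*w^2 + (-4)*vp^4*vq^4*w^4 + (-72)*vp^4*vq^4*vt^2 + (-24)*vp^4*vq^4*vt^2*w^2 + 72*vp^4*vq^4*vs^2 + 32*vp^4*vq^4*vs^2*w^2 + (-8)*vp^4*vq^4*vs^2*w^4 + 144*vp^4*vq^4*vr + 24*vp^4*vq^4*vr*w^2 + 144*vp^4*vq^4*vr*vt + 48*vp^4*vq^4*vr*vt*w^2 + (-84)*vp^4*vq^4*vr^2 + (-12)*vp^4*vq^4*vr^2*w^2 + 4*vp^4*vq^4*vr^2*w^4 + 72*vp^4*vq^5*vD + 12*vp^4*vq^5*vD*w^2 + 36*vp^4*vq^5*vB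 + 12*vp^4*vq^5*vB*w^2 + 4*vp^4*vq^5*vB*w^4 + (-48)*vp^4*vq^6 + (-4)*vp^4*vq^6*w^2 + (-24)*vp^4*vq^6*vt^2 + 8*vp^4*vq^6*vs^2 + (-8)*vp^4*vq^6*vs^2*w^2 + 32*vp^4*vq^6*vr + 48*vp^4*vq^6*vr*vt + (-8)*vp^4*vq^6*vr^2 + 4*vp^4*vq^6*vr^2*w^2 + 12*vp^4*vq^7*vD + 24*vp^4*vq^7*vB + 4*vp^4*vq^7*vB*w^2 + (-4)*vp^4*vq^8 + (-8)*vp^4*vq^8*vs^2 + 4*vp^4*vq^8*vr^2 + 4*vp^4*vq^9*vB + 60*vp^5*vC + 40*vp^5*vC*w^2 + 24*vp^5*vC*w^4 + 12*vp^5*vC*w^6 + 4*vp^5*vC*w^8 + 40*vp^5*vA + 24*vp^5*vA*w^2 + 12*vp^5*vA*w^4 + 4*vp^5*vA*w^6 + 4*vp^5*vA*w^8 + (-320)*vp^5*vq*vs*vt + (-192)*vp^5*vq*vs*vt*w^2 + (-96)*vp^5*vq*vs*vt*w^4 + (-32)*vp^5*vq*vs*vt*w^6 + (-32)*vp^5*vq*vr*vs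 + 16*vp^5*vq*vr*vs*w^4 + (-32)*vp^5*vq*vr*vs*w^6 + 40*vp^5*vq^2*vC + (-12)*vp^5*vq^2*vC*w^4 + (-8)*vp^5*vq^2*vC*w^6 + 112*vp^5*vq^2*vA + 48*vp^5*vq^2*vA*w^2 + 16*vp^5*vq^2*vA*w^4 + 4*vp^5*vq^2*vA*w^6 + (-288)*vp^5*vq^3*vs*vt + (-48)*vp^5*vq^3*vs*vt*w^2 + 16*vp^5*vq^3*vs*vt*w^4 + (-144)*vp^5*vq^3*vr*vs + (-64)*vp^5*vq^3*vr*vs*w^2 + (-32)*vp^5*vq^3*vr*vs*w^4 + (-72)*vp^5*vq^4*vC + (-36)*vp^5*vq^4*vC*w^2 + (-8)*vp^5*vq^4*vC*w^4 + 108*vp^5*vq^4*vA + 28*vp^5*vq^4*vA*w^2 + 4*vp^5*vq^4*vA*w^4 + 16*vp^5*vq^5*vs*vt*w^2 + (-144)*vp^5*vq^5*vr*vs + (-32)*vp^5*vq^5*vr*vs*w^2 + (-60)*vp^5*vq^6*vC + (-8)*vp^5*vq^6*vC*w^2 + 40*vp^5*vq^6*vA + 4*vp^5*vq^6*vA*w^2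 + 16*vp^5*vq^7*vs*vt + (-32)*vp^5*vq^7*vr*vs + (-8)*vp^5*vq^8*vC + 4*vp^5*vq^8*vA + (-80)*vp^6 + (-40)*vp^6*w^2 + (-16)*vp^6*w^4 + (-4)*vp^6*w^6 + 80*vp^6*vt^2 + 40*vp^6*vt^2*w^2 + 16*vp^6*vt^2*w^4 + 4*vp^6*vt^2*w^6 + (-80)*vp^6*vs^2 + (-48)*vp^6*vs^2*w^2 + (-24)*vp^6*vs^2*w^4 + (-8)*vp^6*vs^2*w^6 + 80*vp^6*vr + 32*vp^6*vr*w^2 + 8*vp^6*vr*w^4 + (-64)*vp^6*vr^2 + (-28)*vp^6*vr^2*w^2 + (-8)*vp^6*vr^2*w^4 + (-12)*vp^6*vr^2*w^6 + 80*vp^6*vq*vD + 40*vp^6*vq*vD*w^2 + 16*vp^6*vq*vD*w^4 + 4*vp^6*vq*vD*w^6 + (-40)*vp^6*vq*vB + (-32)*vp^6*vq*vB*w^2 + (-20)*vp^6*vq*vB*w^4 + (-8)*vp^6*vq*vB*w^6 + (-160)*vp^6*vq^2 + (-48)*vp^6*vq^2*w^2 + (-8)*vp^6*vq^2*w^4 +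 (-16)*vp^6*vq^2*vt^2*w^2 + (-8)*vp^6*vq^2*vt^2*w^4 + 64*vp^6*vq^2*vs^2 + 64*vp^6*vq^2*vs^2*w^2 + 32*vp^6*vq^2*vs^2*w^4 + 128*vp^6*vq^2*vr + 24*vp^6*vq^2*vr*w^2 + 144*vp^6*vq^2*vr*vt + 72*vp^6*vq^2*vr*vt*w^2 + 24*vp^6*vq^2*vr*vt*w^4 + (-112)*vp^6*vq^2*vr^2 + (-32)*vp^6*vq^2*vr^2*w^2 + (-8)*vp^6*vq^2*vr^2*w^4 + 120*vp^6*vq^3*vD + 32*vp^6*vq^3*vD*w^2 + 4*vp^6*vq^3*vD*w^4 + (-56)*vp^6*vq^3*vB + (-24)*vp^6*vq^3*vB*w^2 + (-4)*vp^6*vq^3*vB*w^4 + (-96)*vp^6*vq^4 + (-12)*vp^6*vq^4*w^2 + (-48)*vp^6*vq^4*vt^2 + (-8)*vp^6*vq^4*vt^2*w^2 + 120*vp^6*vq^4*vs^2 + 24*vp^6*vq^4*vs^2*w^2 + 48*vp^6*vq^4*vr + 144*vp^6*vq^4*vr*vt + 24*vp^6*vq^4*vr*vt*w^2 + (-48)*vp^6*vq^4*vr^2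 + (-4)*vp^6*vq^4*vr^2*w^2 + 48*vp^6*vq^5*vD + 4*vp^6*vq^5*vD*w^2 + (-12)*vp^6*vq^5*vB + (-16)*vp^6*vq^6 + (-8)*vp^6*vq^6*vt^2 + 16*vp^6*vq^6*vs^2 + 24*vp^6*vq^6*vr*vt + 4*vp^6*vq^7*vD + 4*vp^6*vq^7*vB + 80*vp^7*vC + 40*vp^7*vC*w^2 + 16*vp^7*vC*w^4 + 4*vp^7*vC*w^6 + 40*vp^7*vA + 16*vp^7*vA*w^2 + 4*vp^7*vA*w^4 + (-320)*vp^7*vq*vs*vt + (-128)*vp^7*vq*vs*vt*w^2 + (-32)*vp^7*vq*vs*vt*w^4 + 32*vp^7*vq*vr*vs + 32*vp^7*vq*vr*vs*w^2 + 16*vp^7*vq*vr*vs*w^4 + 40*vp^7*vq^2*vC + (-4)*vp^7*vq^2*vC*w^4 + 88*vp^7*vq^2*vA + 24*vp^7*vq^2*vA*w^2 + 4*vp^7*vq^2*vA*w^4 + (-192)*vp^7*vq^3*vs*vt + (-16)*vp^7*vq^3*vs*vt*w^2 + (-48)*vp^7*vq^3*vr*vs + (-16)*vp^7*vq^3*vr*vs*w^2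 + (-48)*vp^7*vq^4*vC + (-12)*vp^7*vq^4*vC*w^2 + 60*vp^7*vq^4*vA + 8*vp^7*vq^4*vA*w^2 + (-48)*vp^7*vq^5*vr*vs + (-20)*vp^7*vq^6*vC + 12*vp^7*vq^6*vA + (-60)*vp^8 + (-20)*vp^8*w^2 + (-4)*vp^8*w^4 + 60*vp^8*vt^2 + 20*vp^8*vt^2*w^2 + 4*vp^8*vt^2*w^4 + (-80)*vp^8*vs^2 + (-32)*vp^8*vs^2*w^2 + (-8)*vp^8*vs^2*w^4 + 40*vp^8*vr + 8*vp^8*vr*w^2 + (-36)*vp^8*vr^2 + (-8)*vp^8*vr^2*w^2 + 60*vp^8*vq*vD + 20*vp^8*vq*vD*w^2 + 4*vp^8*vq*vD*w^4 + (-60)*vp^8*vq*vB + (-28)*vp^8*vq*vB*w^2 + (-8)*vp^8*vq*vB*w^4 + (-80)*vp^8*vq^2 + (-12)*vp^8*vq^2*w^2 + (-4)*vp^8*vq^2*vt^2*w^2 + 56*vp^8*vq^2*vs^2 + 24*vp^8*vq^2*vs^2*w^2 + 32*vp^8*vq^2*vr + 96*vp^8*vq^2*vr*vt + 24*vp^8*vq^2*vr*vt*w^2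 + (-48)*vp^8*vq^2*vr^2 + (-8)*vp^8*vq^2*vr^2*w^2 + 60*vp^8*vq^3*vD + 8*vp^8*vq^3*vD*w^2 + (-64)*vp^8*vq^3*vB + (-12)*vp^8*vq^3*vB*w^2 + (-24)*vp^8*vq^4 + (-12)*vp^8*vq^4*vt^2 + 48*vp^8*vq^4*vs^2 + 48*vp^8*vq^4*vr*vt + (-12)*vp^8*vq^4*vr^2 + 12*vp^8*vq^5*vD + (-12)*vp^8*vq^5*vB + 60*vp^9*vC + 20*vp^9*vC*w^2 + 4*vp^9*vC*w^4 + 20*vp^9*vA + 4*vp^9*vA*w^2 + (-160)*vp^9*vq*vs*vt + (-32)*vp^9*vq*vs*vt*w^2 + 48*vp^9*vq*vr*vs + 16*vp^9*vq*vr*vs*w^2 + 20*vp^9*vq^2*vC + 32*vp^9*vq^2*vA + 4*vp^9*vq^2*vA*w^2 + (-48)*vp^9*vq^3*vs*vt + (-12)*vp^9*vq^4*vC + 12*vp^9*vq^4*vA + (-24)*vp^10 + (-4)*vp^10*w^2 + 24*vp^10*vt^2 + 4*vp^10*vt^2*w^2 + (-40)*vp^10*vs^2 + (-8)*vp^10*vs^2*w^2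 + 8*vp^10*vr + (-8)*vp^10*vr^2 + 24*vp^10*vq*vD + 4*vp^10*vq*vD*w^2 + (-36)*vp^10*vq*vB + (-8)*vp^10*vq*vB*w^2 + (-16)*vp^10*vq^2 + 16*vp^10*vq^2*vs^2 + 24*vp^10*vq^2*vr*vt + (-8)*vp^10*vq^2*vr^2 + 12*vp^10*vq^3*vD + (-20)*vp^10*vq^3*vB + 24*vp^11*vC + 4*vp^11*vC*w^2 + 4*vp^11*vA + (-32)*vp^11*vq*vs*vt + 16*vp^11*vq*vr*vs + 4*vp^11*vq^2*vC + 4*vp^11*vq^2*vA + (-4)*vp^12 + 4*vp^12*vt^2 + (-8)*vp^12*vs^2 + 4*vp^12*vq*vD + (-8)*vp^12*vq*vB + 4*vp^13*vC) * hw + (4 + 4*vt + (-4)*vr + 16*vq^2 + 4*vq^2*vt + (-16)*vq^2*vr + 24*vq^4 + (-12)*vq^4*vt + (-24)*vq^4*vr + 16*vq^6 + (-20)*vq^6*vt + (-16)*vq^6*vr + 4*vq^8 + (-8)*vq^8*vt + (-4)*vq^8*vr + (-24)*vp*vq*vs + (-72)*vp*vq^3*vs + (-72)*vp*vq^5*vs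 + (-24)*vp*vq^7*vs + 24*vp^2 + 24*vp^2*vt + (-28)*vp^2*vr + 80*vp^2*vq^2 + 20*vp^2*vq^2*vt + (-84)*vp^2*vq^2*vr + 96*vp^2*vq^4 + (-48)*vp^2*vq^4*vt + (-84)*vp^2*vq^4*vr + 48*vp^2*vq^6 + (-60)*vp^2*vq^6*vt + (-28)*vp^2*vq^6*vr + 8*vp^2*vq^8 + (-16)*vp^2*vq^8*vt + (-120)*vp^3*vq*vs + (-288)*vp^3*vq^3*vs + (-216)*vp^3*vq^5*vs + (-48)*vp^3*vq^7*vs + 60*vp^4 + 60*vp^4*vt + (-80)*vp^4*vr + 160*vp^4*vq^2 + 40*vp^4*vq^2*vt + (-176)*vp^4*vq^2*vr + 144*vp^4*vq^4 + (-72)*vp^4*vq^4*vt + (-108)*vp^4*vq^4*vr + 48*vp^4*vq^6 + (-60)*vp^4*vq^6*vt + (-8)*vp^4*vq^6*vr + 4*vp^4*vq^8 + (-8)*vp^4*vq^8*vt + 4*vp^4*vq^8*vr + (-240)*vp^5*vq*vs + (-432)*vp^5*vq^3*vs + (-216)*vp^5*vq^5*vs + (-24)*vp^5*vq^7*vs +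 80*vp^6 + 80*vp^6*vt + (-120)*vp^6*vr + 160*vp^6*vq^2 + 40*vp^6*vq^2*vt + (-184)*vp^6*vq^2*vr + 96*vp^6*vq^4 + (-48)*vp^6*vq^4*vt + (-60)*vp^6*vq^4*vr + 16*vp^6*vq^6 + (-20)*vp^6*vq^6*vt + 4*vp^6*vq^6*vr + (-240)*vp^7*vq*vs + (-288)*vp^7*vq^3*vs + (-72)*vp^7*vq^5*vs + 60*vp^8 + 60*vp^8*vt + (-100)*vp^8*vr + 80*vp^8*vq^2 + 20*vp^8*vq^2*vt + (-96)*vp^8*vq^2*vr + 24*vp^8*vq^4 + (-12)*vp^8*vq^4*vt + (-12)*vp^8*vq^4*vr + (-120)*vp^9*vq*vs + (-72)*vp^9*vq^3*vs + 24*vp^10 + 24*vp^10*vt + (-44)*vp^10*vr + 16*vp^10*vq^2 + 4*vp^10*vq^2*vt + (-20)*vp^10*vq^2*vr + (-24)*vp^11*vq*vs + 4*vp^12 + 4*vp^12*vt + (-8)*vp^12*vr) * e0 + (4*vp + 16*vp*vq^2 + 24*vp*vq^4 + 16*vp*vq^6 + 4*vp*vq^8 + 24*vp^3 + 80*vp^3*vq^2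 + 96*vp^3*vq^4 + 48*vp^3*vq^6 + 8*vp^3*vq^8 + 60*vp^5 + 160*vp^5*vq^2 + 144*vp^5*vq^4 + 48*vp^5*vq^6 + 4*vp^5*vq^8 + 80*vp^7 + 160*vp^7*vq^2 + 96*vp^7*vq^4 + 16*vp^7*vq^6 + 60*vp^9 + 80*vp^9*vq^2 + 24*vp^9*vq^4 + 24*vp^11 + 16*vp^11*vq^2 + 4*vp^13) * e1 + (4*vq + 16*vq^3 + 24*vq^5 + 16*vq^7 + 4*vq^9 + 24*vp^2*vq + 80*vp^2*vq^3 + 96*vp^2*vq^5 + 48*vp^2*vq^7 + 8*vp^2*vq^9 + 60*vp^4*vq + 160*vp^4*vq^3 + 144*vp^4*vq^5 + 48*vp^4*vq^7 + 4*vp^4*vq^9 + 80*vp^6*vq + 160*vp^6*vq^3 + 96*vp^6*vq^5 + 16*vp^6*vq^7 + 60*vp^8*vq + 80*vp^8*vq^3 + 24*vp^8*vq^5 + 24*vp^10*vq + 16*vp^10*vq^3 + 4*vp^12*vq) * e2 + ((-12)*w^9*W1 + (-12)*vq*vs*w^8 + (-12)*vp*vr*w^8 + 24*vp*vq*w^7*W2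 + 12*vp^2*w^7*W1 + (-24)*vp^2*w^9*W1 + 12*vp^2*vq*vs*w^6 + (-24)*vp^2*vq*vs*w^8 + 12*vp^3*vr*w^6 + (-24)*vp^3*vr*w^8 + 48*vp^3*vq*w^7*W2 + 24*vp^4*w^7*W1 + (-12)*vp^4*w^9*W1 + 24*vp^4*vq*vs*w^6 + (-12)*vp^4*vq*vs*w^8 + 24*vp^5*vr*w^6 + (-12)*vp^5*vr*w^8 + 24*vp^5*vq*w^7*W2 + 12*vp^6*w^7*W1 + 12*vp^6*vq*vs*w^6 + 12*vp^7*vr*w^6) * hW1 + ((-12)*w^9*W2 + (-12)*vq*vt*w^8 + 12*vq^2*w^7*W2 + 12*vq^3*vt*w^6 + (-12)*vp*vs*w^8 + 36*vp*vq^2*vs*w^6 + (-24)*vp^2*w^9*W2 + (-24)*vp^2*vq*vt*w^8 + 24*vp^2*vq*vr*w^6 + 24*vp^2*vq^2*w^7*W2 + 24*vp^2*vq^3*vt*w^6 + (-24)*vp^3*vs*w^8 + 72*vp^3*vq^2*vs*w^6 + (-12)*vp^4*w^9*W2 + (-12)*vp^4*vq*vt*w^8 + 48*vp^4*vq*vr*w^6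 + 12*vp^4*vq^2*w^7*W2 + 12*vp^4*vq^3*vt*w^6 + (-12)*vp^5*vs*w^8 + 36*vp^5*vq^2*vs*w^6 + 24*vp^6*vq*vr*w^6) * hW2 + (4*w^10 + (-4)*vp^2*w^8 + 8*vp^2*w^10 + (-8)*vp^4*w^8 + 4*vp^4*w^10 + (-4)*vp^6*w^8) * h11 + ((-4)*vp*vq*w^8 + (-8)*vp^3*vq*w^8 + (-4)*vp^5*vq*w^8) * h12 + ((-4)*vp*vq*w^8 + (-8)*vp^3*vq*w^8 + (-4)*vp^5*vq*w^8) * h21 + (4*w^10 + (-4)*vq^2*w^8 + 8*vp^2*w^10 + (-8)*vp^2*vq^2*w^8 + 4*vp^4*w^10 + (-4)*vp^4*vq^2*w^8) * h22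
  rw [main]
  positivity

/-- For a smooth graphical translating soliton, with
`a^{ij} = δ_{ij} − u_{x_i}u_{x_j}/W²`, the function `W = √(1+|∇u|²)` satisfies
`Σ a^{ij} W_{x_i x_j} − (2/W) Σ a^{ij} W_{x_i} W_{x_j} ≥ 1/(2W)` on `Ω`. -/
theorem W_supersolution (Ω : Set (ℝ × ℝ)) (hΩ : IsOpen Ω)
    (u : ℝ × ℝ → ℝ) (hu : ContDiffOn ℝ (⊤ : ℕ∞) u Ω)
    (hsol : ∀ p ∈ Ω, IsSolitonAt u p) :
    ∀ p ∈ Ω,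
      letI W := Wfun u
      letI a11 := 1 - (pd1 u p) ^ 2 / (W p) ^ 2
      letI a12 := -(pd1 u p * pd2 u p) / (W p) ^ 2
      letI a22 := 1 - (pd2 u p) ^ 2 / (W p) ^ 2
      (a11 * pd1 (pd1 W) p + a12 * pd2 (pd1 W) p + a12 * pd1 (pd2 W) p
          + a22 * pd2 (pd2 W) p)
        - (2 / W p) * (a11 * (pd1 W p) ^ 2 + 2 * a12 * pd1 W p * pd2 W p
          + a22 * (pd2 W p) ^ 2)
      ≥ 1 / (2 * W p) := by
  intro p hp
  have hu4 : ContDiffOn ℝ ((3:ℕ)+1) u Ω := hu.of_le (WithTop.coe_le_coe.mpr le_top)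
  have hP3 : ContDiffOn ℝ (3:ℕ) (pd1 u) Ω := contDiffOn_pd1 hΩ hu4
  have hQ3 : ContDiffOn ℝ (3:ℕ) (pd2 u) Ω := contDiffOn_pd2 hΩ hu4
  have hW3 : ContDiffOn ℝ (3:ℕ) (Wfun u) Ω := Wfun_contDiffOn hΩ hu4
  have hR1 : ContDiffOn ℝ (1:ℕ) (pd1 (pd1 u)) Ω := contDiffOn_pd1 hΩ (hP3.of_le (by norm_num))
  have hS1 : ContDiffOn ℝ (1:ℕ) (pd2 (pd1 u)) Ω := contDiffOn_pd2 hΩ (hP3.of_le (by norm_num))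
  have hS'1 : ContDiffOn ℝ (1:ℕ) (pd1 (pd2 u)) Ω := contDiffOn_pd1 hΩ (hQ3.of_le (by norm_num))
  have hT1 : ContDiffOn ℝ (1:ℕ) (pd2 (pd2 u)) Ω := contDiffOn_pd2 hΩ (hQ3.of_le (by norm_num))
  have hWp1 : ContDiffOn ℝ (1:ℕ) (pd1 (Wfun u)) Ω := contDiffOn_pd1 hΩ (hW3.of_le (by norm_num))
  have hWp2 : ContDiffOn ℝ (1:ℕ) (pd2 (Wfun u)) Ω := contDiffOn_pd2 hΩ (hW3.of_le (by norm_num))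
  have dP := (diffAt_of hΩ (hP3.of_le (by norm_num)) hp).hasFDerivAt
  have dQ := (diffAt_of hΩ (hQ3.of_le (by norm_num)) hp).hasFDerivAt
  have dW := (diffAt_of hΩ (hW3.of_le (by norm_num)) hp).hasFDerivAt
  have dR := (diffAt_of hΩ hR1 hp).hasFDerivAt
  have dS := (diffAt_of hΩ hS1 hp).hasFDerivAt
  have dS' := (diffAt_of hΩ hS'1 hp).hasFDerivAt
  have dT := (diffAt_of hΩ hT1 hp).hasFDerivAt
  have dW1 := (diffAt_of hΩ hWp1 hp).hasFDerivAt
  have dW2 := (diffAt_of hΩ hWp2 hp).hasFDerivAt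
  -- symmetry facts
  have hsym : ∀ y ∈ Ω, pd1 (pd2 u) y = pd2 (pd1 u) y := fun y hy =>
    schwarz hΩ (hu.of_le (WithTop.coe_le_coe.mpr le_top)) hy
  have hsymP : pd1 (pd2 (pd1 u)) p = pd2 (pd1 (pd1 u)) p :=
    schwarz hΩ (hP3.of_le (by norm_num)) hp
  have hsymQ : pd1 (pd2 (pd2 u)) p = pd2 (pd1 (pd2 u)) p :=
    schwarz hΩ (hQ3.of_le (by norm_num)) hp
  have hsd1 : pd1 (pd1 (pd2 u)) p = pd1 (pd2 (pd1 u)) p := by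
    rw [pd1_def, pd1_def, fderiv_eqOn hΩ hp hsym]
  have hsd2 : pd2 (pd1 (pd2 u)) p = pd2 (pd2 (pd1 u)) p := by
    rw [pd2_def, pd2_def, fderiv_eqOn hΩ hp hsym]
  -- the four second-derivative identities for W
  have k11 : Wfun u p * pd1 (pd1 (Wfun u)) p + pd1 (Wfun u) p * pd1 (Wfun u) p
      = pd1 u p * pd1 (pd1 (pd1 u)) p + pd1 (pd1 u) p * pd1 (pd1 u) p
        + (pd2 u p * pd1 (pd1 (pd2 u)) p + pd1 (pd2 u) p * pd1 (pd2 u) p) := by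
    have E : fderiv ℝ (fun z => Wfun u z * pd1 (Wfun u) z) p (1,0)
        = fderiv ℝ (fun z => pd1 u z * pd1 (pd1 u) z + pd2 u z * pd1 (pd2 u) z) p (1,0) := by
      rw [fderiv_eqOn (g := fun z => pd1 u z * pd1 (pd1 u) z + pd2 u z * pd1 (pd2 u) z)
        hΩ hp (fun y hy => idW1 hΩ hu4 hy)]
    erw [(dW.mul dW1).fderiv, ((dP.mul dR).add (dQ.mul dS')).fderiv] at E
    simp only [ContinuousLinearMap.add_apply, ContinuousLinearMap.coe_smul', Pi.smul_apply,
      smul_eq_mul, ← pd1_def] at E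
    linarith
  have k12 : Wfun u p * pd2 (pd1 (Wfun u)) p + pd2 (Wfun u) p * pd1 (Wfun u) p
      = pd1 u p * pd2 (pd1 (pd1 u)) p + pd2 (pd1 u) p * pd1 (pd1 u) p
        + (pd2 u p * pd2 (pd1 (pd2 u)) p + pd2 (pd2 u) p * pd1 (pd2 u) p) := by
    have E : fderiv ℝ (fun z => Wfun u z * pd1 (Wfun u) z) p (0,1)
        = fderiv ℝ (fun z => pd1 u z * pd1 (pd1 u) z + pd2 u z * pd1 (pd2 u) z) p (0,1) := by
      rw [fderiv_eqOn (g := fun z => pd1 u z * pd1 (pd1 u) z + pd2 u z * pd1 (pd2 u) z)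
        hΩ hp (fun y hy => idW1 hΩ hu4 hy)]
    erw [(dW.mul dW1).fderiv, ((dP.mul dR).add (dQ.mul dS')).fderiv] at E
    simp only [ContinuousLinearMap.add_apply, ContinuousLinearMap.coe_smul', Pi.smul_apply,
      smul_eq_mul, ← pd2_def] at E
    linarith
  have k21 : Wfun u p * pd1 (pd2 (Wfun u)) p + pd1 (Wfun u) p * pd2 (Wfun u) p
      = pd1 u p * pd1 (pd2 (pd1 u)) p + pd1 (pd1 u) p * pd2 (pd1 u) p
        + (pd2 u p * pd1 (pd2 (pd2 u)) p + pd1 (pd2 u) p * pd2 (pd2 u) p) := by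
    have E : fderiv ℝ (fun z => Wfun u z * pd2 (Wfun u) z) p (1,0)
        = fderiv ℝ (fun z => pd1 u z * pd2 (pd1 u) z + pd2 u z * pd2 (pd2 u) z) p (1,0) := by
      rw [fderiv_eqOn (g := fun z => pd1 u z * pd2 (pd1 u) z + pd2 u z * pd2 (pd2 u) z)
        hΩ hp (fun y hy => idW2 hΩ hu4 hy)]
    erw [(dW.mul dW2).fderiv, ((dP.mul dS).add (dQ.mul dT)).fderiv] at E
    simp only [ContinuousLinearMap.add_apply, ContinuousLinearMap.coe_smul', Pi.smul_apply,
      smul_eq_mul, ← pd1_def] at E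
    linarith
  have k22 : Wfun u p * pd2 (pd2 (Wfun u)) p + pd2 (Wfun u) p * pd2 (Wfun u) p
      = pd1 u p * pd2 (pd2 (pd1 u)) p + pd2 (pd1 u) p * pd2 (pd1 u) p
        + (pd2 u p * pd2 (pd2 (pd2 u)) p + pd2 (pd2 u) p * pd2 (pd2 u) p) := by
    have E : fderiv ℝ (fun z => Wfun u z * pd2 (Wfun u) z) p (0,1)
        = fderiv ℝ (fun z => pd1 u z * pd2 (pd1 u) z + pd2 u z * pd2 (pd2 u) z) p (0,1) := by
      rw [fderiv_eqOn (g := fun z => pd1 u z * pd2 (pd1 u) z + pd2 u z * pd2 (pd2 u) z)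
        hΩ hp (fun y hy => idW2 hΩ hu4 hy)]
    erw [(dW.mul dW2).fderiv, ((dP.mul dS).add (dQ.mul dT)).fderiv] at E
    simp only [ContinuousLinearMap.add_apply, ContinuousLinearMap.coe_smul', Pi.smul_apply,
      smul_eq_mul, ← pd2_def] at E
    linarith
  -- differentiated soliton equation
  have hZero : ∀ y ∈ Ω, (1 + pd2 u y * pd2 u y) * pd1 (pd1 u) y
      - 2 * pd1 u y * pd2 u y * pd2 (pd1 u) y
      + (1 + pd1 u y * pd1 u y) * pd2 (pd2 u) y
      - (1 + pd1 u y * pd1 u y + pd2 u y * pd2 u y) = 0 := by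
    intro y hy
    have h := hsol y hy
    rw [IsSolitonAt] at h
    linear_combination h
  have hF := (((((dQ.mul dQ).const_add 1).mul dR).sub
      (((dP.const_mul 2).mul dQ).mul dS)).add
      (((dP.mul dP).const_add 1).mul dT)).sub
      (((dP.mul dP).const_add 1).add (dQ.mul dQ))
  have E1 : fderiv ℝ (fun z => (1 + pd2 u z * pd2 u z) * pd1 (pd1 u) z
      - 2 * pd1 u z * pd2 u z * pd2 (pd1 u) z
      + (1 + pd1 u z * pd1 u z) * pd2 (pd2 u) z
      - (1 + pd1 u z * pd1 u z + pd2 u z * pd2 u z)) p (1,0)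
      = fderiv ℝ (fun _ => (0:ℝ)) p (1,0) := by
    rw [fderiv_eqOn (g := fun _ => (0:ℝ)) hΩ hp hZero]
  have E2 : fderiv ℝ (fun z => (1 + pd2 u z * pd2 u z) * pd1 (pd1 u) z
      - 2 * pd1 u z * pd2 u z * pd2 (pd1 u) z
      + (1 + pd1 u z * pd1 u z) * pd2 (pd2 u) z
      - (1 + pd1 u z * pd1 u z + pd2 u z * pd2 u z)) p (0,1)
      = fderiv ℝ (fun _ => (0:ℝ)) p (0,1) := by
    rw [fderiv_eqOn (g := fun _ => (0:ℝ)) hΩ hp hZero]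
  erw [hF.fderiv, fderiv_const] at E1 E2
  simp only [ContinuousLinearMap.add_apply, ContinuousLinearMap.sub_apply,
    ContinuousLinearMap.coe_smul', Pi.smul_apply, smul_eq_mul,
    ContinuousLinearMap.zero_apply, Pi.zero_apply, Pi.mul_apply, ← pd1_def, ← pd2_def] at E1 E2
  -- canonicalize third-derivative atoms
  rw [hsym p hp] at k11 k12 k21
  rw [hsd1, hsymP] at k11
  rw [hsd2] at k12
  rw [hsymP, hsymQ, hsd2] at k21
  rw [hsym p hp, hsymP, hsymQ, hsd2] at E1
  have hW1k := idW1 hΩ hu4 hp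
  have hW2k := idW2 hΩ hu4 hp
  rw [hsym p hp] at hW1k
  have e0 : (1 + (pd2 u p)^2) * pd1 (pd1 u) p - 2*(pd1 u p)*(pd2 u p)*(pd2 (pd1 u) p)
      + (1+(pd1 u p)^2)*(pd2 (pd2 u) p) = 1 + (pd1 u p)^2 + (pd2 u p)^2 := by
    have h := hsol p hp
    rw [IsSolitonAt] at h
    linear_combination h
  exact key (pd1 u p) (pd2 u p) (pd1 (pd1 u) p) (pd2 (pd1 u) p) (pd2 (pd2 u) p)
    (pd1 (pd1 (pd1 u)) p) (pd2 (pd1 (pd1 u)) p) (pd2 (pd2 (pd1 u)) p) (pd2 (pd2 (pd2 u)) p)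
    (Wfun u p) (pd1 (Wfun u) p) (pd2 (Wfun u) p)
    (pd1 (pd1 (Wfun u)) p) (pd2 (pd1 (Wfun u)) p) (pd1 (pd2 (Wfun u)) p) (pd2 (pd2 (Wfun u)) p)
    (Wfun_sq u p) (Wfun_pos u p) (by linear_combination e0)
    (by linear_combination E1) (by linear_combination E2)
    (by linear_combination hW1k) (by linear_combination hW2k)
    (by linear_combination k11) (by linear_combination k12)
    (by linear_combination k21) (by linear_combination k22)
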